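/- In a plane graph with no 4-cycles and no 6-cycles, no 5-face is adjacent to a 3-face (i.e., no face of length 5 shares an edge with a face of length 3 when both faces are bounded by cycles). -/

import Mathlib

/-!
Removing the common edge `uv` from the 5-cycle leaves a path `v x₁ x₂ x₃ u`, and the triangle
gives a common neighbour `w` of `u` and `v`. If `w = x₁` or `w = x₃` the path closes through `w`
into a 4-cycle, if `w = x₂` then `v x₁ x₂ u` closes into a 4-cycle through the edge `uv`, and
otherwise `v x₁ x₂ x₃ u w` is a 6-cycle.
-/

/-- A matching assignment for a graph `G` with list assignment `L`:
for each edge `uv`, a (possibly empty) matching between `{u} × L u` and `{v} × L v`. -/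
structure MatchingAssignment {V : Type} (G : SimpleGraph V) (L : V → Finset ℕ) where
  M : V → ℕ → V → ℕ → Prop
  symm : ∀ u i v j, M u i v j → M v j u i
  adj : ∀ u i v j, M u i v j → G.Adj u v
  mem_left : ∀ u i v j, M u i v j → i ∈ L u
  mem_right : ∀ u i v j, M u i v j → j ∈ L v
  right_unique : ∀ u i v j j', M u i v j → M u i v j' → j = j'
  left_unique : ∀ u i i' v j, M u i v j → M u i' v j → i = i'

/-- The cover graph `G_L`: each fiber `{v} × L v` is a clique, and between fibers of
adjacent vertices the edges are exactly those of the matching. -/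
def coverGraph {V : Type} (G : SimpleGraph V) (L : V → Finset ℕ)
    (MA : MatchingAssignment G L) : SimpleGraph (V × ℕ) where
  Adj p q := (p.1 = q.1 ∧ p.2 ≠ q.2 ∧ p.2 ∈ L p.1 ∧ q.2 ∈ L q.1) ∨ MA.M p.1 p.2 q.1 q.2
  symm := by
    constructor
    rintro p q (⟨h1, h2, h3, h4⟩ | h)
    · exact Or.inl ⟨h1.symm, fun h' => h2 h'.symm, h4, h3⟩
    · exact Or.inr (MA.symm _ _ _ _ h)
  loopless := by
    constructor
    rintro p (⟨h1, h2, h3, h4⟩ | h)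
    · exact h2 rfl
    · exact (MA.adj _ _ _ _ h).ne rfl

/-- An independent set in a simple graph. -/
def SimpleGraph.IsIndepSetOld {α : Type} (H : SimpleGraph α) (I : Set α) : Prop :=
  ∀ p ∈ I, ∀ q ∈ I, ¬ H.Adj p q

/-- `G` is DP-`k`-colorable: for every list assignment with lists of size `k` and every
matching assignment, the cover graph contains an independent set of size `|V(G)|`
(with all its vertices in the fibers). -/
def DPColorable {V : Type} [Fintype V] [DecidableEq V] (G : SimpleGraph V) (k : ℕ) : Prop :=
  ∀ L : V → Finset ℕ, (∀ v, (L v).card = k) → ∀ MA : MatchingAssignment G L,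
    ∃ I : Finset (V × ℕ), I.card = Fintype.card V ∧ (∀ p ∈ I, p.2 ∈ L p.1) ∧
      (coverGraph G L MA).IsIndepSetOld ↑I

/-- The DP-chromatic number. -/
noncomputable def dpChromaticNumber {V : Type} [Fintype V] [DecidableEq V]
    (G : SimpleGraph V) : ℕ :=
  sInf {k | DPColorable G k}

/-- `G` is `k`-choosable. -/
def Choosable {V : Type} (G : SimpleGraph V) (k : ℕ) : Prop :=
  ∀ L : V → Finset ℕ, (∀ v, k ≤ (L v).card) →
    ∃ c : V → ℕ, (∀ v, c v ∈ L v) ∧ ∀ u v, G.Adj u v → c u ≠ c v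

/-- The list chromatic number. -/
noncomputable def listChromaticNumber {V : Type} (G : SimpleGraph V) : ℕ :=
  sInf {k | Choosable G k}

namespace SimpleGraph

variable {V : Type*} {G : SimpleGraph V}

namespace Walk

lemma IsCycle.exists_isPath_of_mem_edges {a u v : V} {c : G.Walk a a} (hc : c.IsCycle)
    (he : s(u, v) ∈ c.edges) : ∃ p : G.Walk v u, p.IsPath ∧ p.length + 1 = c.length := by
  classical
  have hu := c.fst_mem_support_of_mem_edges he
  have hc' := hc.rotate hu
  have hadj : (c.rotate u hu).toSubgraph.Adj u v := by
    rwa [adj_toSubgraph_iff_mem_edges, (rotate_edges c u hu).mem_iff]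
  have hlen := hc.three_le_length
  rw [← Subgraph.mem_neighborSet, hc'.neighborSet_toSubgraph_endpoint] at hadj
  rcases hadj with rfl | rfl
  · exact ⟨_, hc'.isPath_tail, by simp; omega⟩
  · exact ⟨_, hc'.isPath_dropLast.reverse, by simp; omega⟩

end Walk

open Walk

lemma not_adj_of_isPath_length_four_of_isPath_length_two
    (h4 : ∀ (v : V) (wk : G.Walk v v), wk.IsCycle → wk.length ≠ 4)
    (h6 : ∀ (v : V) (wk : G.Walk v v), wk.IsCycle → wk.length ≠ 6)
    {u v : V} {p q : G.Walk v u} (hp : p.IsPath) (hpl : p.length = 4)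
    (hq : q.IsPath) (hql : q.length = 2) : ¬ G.Adj u v := by
  intro huv
  obtain _ | @⟨_, x₁, _, h₁, _ | @⟨_, x₂, _, h₂, _ | @⟨_, x₃, _, h₃, _ | ⟨h₄, _ | ⟨_, _⟩⟩⟩⟩⟩ := p <;>
    simp at hpl
  obtain _ | @⟨_, w, _, hvw, _ | ⟨hwu, _ | ⟨_, _⟩⟩⟩ := q <;> simp at hql
  simp only [cons_isPath_iff, isPath_iff_nil, support_cons, support_nil, List.mem_cons,
    List.not_mem_nil, or_false, not_or] at hp hq
  obtain rfl | rfl | rfl | hw : w = x₁ ∨ w = x₂ ∨ w = x₃ ∨ (w ≠ x₁ ∧ w ≠ x₂ ∧ w ≠ x₃) := by tauto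
  · refine h4 _ (cons h₂ (cons h₃ (cons h₄ (cons hwu.symm nil)))) ?_ rfl
    simp [isCycle_iff_isPath_tail_and_le_length]
    grind
  · refine h4 _ (cons h₁ (cons h₂ (cons hwu (cons huv nil)))) ?_ rfl
    simp [isCycle_iff_isPath_tail_and_le_length]
    grind
  · refine h4 _ (cons h₁ (cons h₂ (cons h₃ (cons hvw.symm nil)))) ?_ rfl
    simp [isCycle_iff_isPath_tail_and_le_length]
    grind
  · refine h6 _ (cons h₁ (cons h₂ (cons h₃ (cons h₄ (cons hwu.symm (cons hvw.symm nil)))))) ?_ rfl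
    simp [isCycle_iff_isPath_tail_and_le_length]
    grind

end SimpleGraph

/-- in a graph with no 4-cycles and no 6-cycles, a 5-cycle and a
3-cycle cannot share an edge (so no 5-face is adjacent to a 3-face). -/
theorem stmt_17 {V : Type} (G : SimpleGraph V)
    (h4 : ∀ (v : V) (wk : G.Walk v v), wk.IsCycle → wk.length ≠ 4)
    (h6 : ∀ (v : V) (wk : G.Walk v v), wk.IsCycle → wk.length ≠ 6)
    (a b : V) (w5 : G.Walk a a) (hw5 : w5.IsCycle) (hl5 : w5.length = 5)
    (w3 : G.Walk b b) (hw3 : w3.IsCycle) (hl3 : w3.length = 3)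
    (e : Sym2 V) : ¬ (e ∈ w5.edges ∧ e ∈ w3.edges) := by
  obtain ⟨u, v⟩ := e
  rintro ⟨he5, he3⟩
  obtain ⟨p, hp, hpl⟩ := hw5.exists_isPath_of_mem_edges he5
  obtain ⟨q, hq, hql⟩ := hw3.exists_isPath_of_mem_edges he3
  exact SimpleGraph.not_adj_of_isPath_length_four_of_isPath_length_two h4 h6 hp (by omega) hq
    (by omega) (w5.adj_of_mem_edges he5)
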